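/- arXiv:2411.16144 — 2 statements merged into one kernel-verified Lean document; each statement's English description precedes it below -/
import Mathlib

section
/- Tightness of Cantelli: for any μ ∈ ℝ, σ² > 0, and t > 0, there exists a two-point distribution with mean μ and variance σ² such that P(X - μ ≥ t) = σ²/(σ² + t²). -/
/-!
Cantelli's bound is Markov's inequality for `(X - μ + u)²` with `u = σ²/t`, and it is attained
exactly when `X - μ` only takes the values `t` (where the indicator bound is tight) and `-u`
(where the square vanishes). Mean `μ` forces the mass at `μ + t` to be `p = σ²/(σ² + t²)`, and
the variance is then `p t² + (1 - p) σ⁴/t² = σ²`.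
-/

open MeasureTheory ProbabilityTheory unitInterval

lemma ofReal_smul_dirac_add_ofReal_smul_dirac_eq_bernoulliMeasure {X : Type*} [MeasurableSpace X]
    (x y : X) (p : I) :
    ENNReal.ofReal p • Measure.dirac x + ENNReal.ofReal (1 - p) • Measure.dirac y =
      Ber(x, y, p) := by
  rw [bernoulliMeasure_def, ENNReal.ofReal, ENNReal.ofReal, ← coe_symm_eq,
    Real.toNNReal_of_nonneg p.2.1, Real.toNNReal_of_nonneg (σ p).2.1]
  rfl

lemma div_add_sq_mem_unitInterval {σ2 : ℝ} (hσ : 0 ≤ σ2) (t : ℝ) :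
    σ2 / (σ2 + t ^ 2) ∈ I :=
  ⟨by positivity, div_le_one_of_le₀ (le_add_of_nonneg_right (sq_nonneg t)) (by positivity)⟩

lemma cantelli_extremal_mean {σ2 t : ℝ} (ht : t ≠ 0) (hσt : σ2 + t ^ 2 ≠ 0) :
    σ2 / (σ2 + t ^ 2) * t + (1 - σ2 / (σ2 + t ^ 2)) * -(σ2 / t) = 0 := by
  field_simp
  ring

lemma cantelli_extremal_variance {σ2 t : ℝ} (ht : t ≠ 0) (hσt : σ2 + t ^ 2 ≠ 0) :
    σ2 / (σ2 + t ^ 2) * t ^ 2 + (1 - σ2 / (σ2 + t ^ 2)) * (-(σ2 / t)) ^ 2 = σ2 := by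
  field_simp
  ring

/-- Tightness of Cantelli: for any `μ ∈ ℝ`, `σ2 > 0`, and `t > 0`, there exists a
two-point distribution (probability `p` at `a`, probability `1 - p` at `b`) with
mean `μ` and variance `σ2` such that `P(X - μ ≥ t) = σ2 / (σ2 + t²)`. -/
theorem cantelli_tight (μ σ2 t : ℝ) (hσ : 0 < σ2) (ht : 0 < t) :
    ∃ (a b p : ℝ), 0 ≤ p ∧ p ≤ 1 ∧
      ∀ P : Measure ℝ,
        P = ENNReal.ofReal p • Measure.dirac a + ENNReal.ofReal (1 - p) • Measure.dirac b →
        IsProbabilityMeasure P ∧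
        (∫ x, x ∂P = μ) ∧
        (∫ x, (x - μ) ^ 2 ∂P = σ2) ∧
        (P {x | t ≤ x - μ}).toReal = σ2 / (σ2 + t ^ 2) := by
  have hσt : σ2 + t ^ 2 ≠ 0 := by positivity
  set p : I := ⟨σ2 / (σ2 + t ^ 2), div_add_sq_mem_unitInterval hσ.le t⟩
  refine ⟨μ + t, μ - σ2 / t, p, p.2.1, p.2.2, ?_⟩
  rintro P rfl
  rw [ofReal_smul_dirac_add_ofReal_smul_dirac_eq_bernoulliMeasure]
  refine ⟨inferInstance, ?_, ?_, ?_⟩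
  · rw [integral_bernoulliMeasure, smul_eq_mul, smul_eq_mul]
    linear_combination cantelli_extremal_mean ht.ne' hσt
  · rw [integral_bernoulliMeasure, smul_eq_mul, smul_eq_mul]
    linear_combination cantelli_extremal_variance ht.ne' hσt
  · have hupper : t ≤ μ + t - μ := by simp
    have hlower : ¬ t ≤ μ - σ2 / t - μ := by linarith [div_pos hσ ht]
    exact bernoulliMeasure_real_apply_of_mem_of_notMem p
      (measurableSet_le measurable_const (by fun_prop)) hupper hlower
end

section
/- Worst-case chance constraint over a mean-variance ambiguity set: let a ∈ ℝⁿ, b ∈ ℝ, and let F be the set of all distributions on ℝⁿ with mean vector μ and positive definite covariance Σ. Then inf over P ∈ F of P(aᵀτ ≤ b) ≥ 1 - δ holds if and only if aᵀμ + sqrt((1-δ)/δ) · sqrt(aᵀΣa) ≤ b. -/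
/-!
Write `σ² = aᵀSa`. For the sufficiency, Cantelli's inequality
`P(X - 𝔼X ≥ t) ≤ σ² / (σ² + t²)`, applied to `X = aᵀτ` and `t = b - aᵀμ`, bounds `P(aᵀτ > b)`
by `δ` exactly when `aᵀμ + √((1-δ)/δ) σ ≤ b`.

For the necessity, Cantelli's bound is attained. Split `S = wwᵀ + CᵀC` with `aᵀw = σ` and
`Ca = 0`, and let `τ = μ + Z w + V`, where `Z` is a Bernoulli(p) indicator standardized to mean `0`
and variance `1`, and `V` is independent of `Z`, uniform on the vectors `±√n · Cₖ` (the rows of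
`C`). Then `τ` has mean `μ` and covariance `S`, while `aᵀτ = aᵀμ + Zσ` exceeds
`aᵀμ + √((1-p)/p) σ` with probability `p`. If `b < aᵀμ + √((1-δ)/δ) σ`, some `p > δ` still has
`b < aᵀμ + √((1-p)/p) σ`, so this distribution violates the chance constraint.
-/

open MeasureTheory Matrix Set

/-- Cantelli's inequality. -/
theorem measureReal_ge_le_div_add_sq {Ω : Type*} [MeasurableSpace Ω] {P : Measure Ω}
    [IsProbabilityMeasure P] {X : Ω → ℝ} (hX : MemLp X 2 P) (hX0 : ∫ ω, X ω ∂P = 0) {t : ℝ}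
    (ht : 0 < t) :
    P.real {ω | t ≤ X ω} ≤ (∫ ω, X ω ^ 2 ∂P) / (∫ ω, X ω ^ 2 ∂P + t ^ 2) := by
  set v := ∫ ω, X ω ^ 2 ∂P
  have hv : 0 ≤ v := integral_nonneg fun ω => sq_nonneg _
  -- Markov's inequality for `(X + u)²`, with the shift `u = v / t` that optimises the bound
  set u := v / t
  have hu : 0 ≤ u := by positivity
  have hXu : ∫ ω, (X ω + u) ^ 2 ∂P = v + u ^ 2 := by
    have hXi := hX.integrable one_le_two
    have hlin : Integrable (fun ω => 2 * X ω * u) P := (hXi.const_mul 2).mul_const u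
    simp_rw [add_sq]
    rw [integral_add (f := fun ω => X ω ^ 2 + 2 * X ω * u) (hX.integrable_sq.add hlin)
        (integrable_const _),
      integral_add hX.integrable_sq hlin, integral_mul_const, integral_const_mul, hX0]
    simp [v]
  have hsub : {ω | t ≤ X ω} ⊆ {ω | (t + u) ^ 2 ≤ (X ω + u) ^ 2} := fun ω hω =>
    pow_le_pow_left₀ (by positivity) (add_le_add_left hω u) 2
  have hmarkov := mul_meas_ge_le_integral_of_nonneg (.of_forall fun ω => sq_nonneg (X ω + u))
    (hX.add (memLp_const u)).integrable_sq ((t + u) ^ 2)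
  rw [hXu] at hmarkov
  calc P.real {ω | t ≤ X ω} ≤ P.real {ω | (t + u) ^ 2 ≤ (X ω + u) ^ 2} := measureReal_mono hsub
    _ ≤ (v + u ^ 2) / (t + u) ^ 2 := by rw [le_div_iff₀ (by positivity)]; linarith
    _ = v / (v + t ^ 2) := by unfold u; field_simp; ring

/-- Membership in the ambiguity set `F`. -/
structure HasMeanCovariance {ι : Type*} (P : Measure (ι → ℝ)) (μ : ι → ℝ) (S : Matrix ι ι ℝ) :
    Prop where
  isProbabilityMeasure : IsProbabilityMeasure P
  memLp_eval : ∀ i, MemLp (fun τ => τ i) 2 P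
  integral_eval : ∀ i, ∫ τ, τ i ∂P = μ i
  integral_mul : ∀ i j, ∫ τ, (τ i - μ i) * (τ j - μ j) ∂P = S i j

lemma div_add_sq_le_of_sqrt_mul_sqrt_le {δ q t : ℝ} (hδ : δ ∈ Ioo 0 1) (hq : 0 ≤ q)
    (h : √((1 - δ) / δ) * √q ≤ t) : q / (q + t ^ 2) ≤ δ := by
  have ht : 0 ≤ t := (by positivity : 0 ≤ √((1 - δ) / δ) * √q).trans h
  have hsq : (1 - δ) / δ * q ≤ t ^ 2 := by
    have := pow_le_pow_left₀ (by positivity) h 2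
    rwa [mul_pow, Real.sq_sqrt (div_nonneg (sub_nonneg.2 hδ.2.le) hδ.1.le), Real.sq_sqrt hq] at this
  rw [div_mul_eq_mul_div, div_le_iff₀ hδ.1] at hsq
  exact div_le_of_le_mul₀ (by positivity) hδ.1.le (by linarith)

namespace HasMeanCovariance

variable {ι : Type*} [Fintype ι] {P : Measure (ι → ℝ)} {μ : ι → ℝ} {S : Matrix ι ι ℝ}

lemma memLp_dotProduct_sub (h : HasMeanCovariance P μ S) (a : ι → ℝ) :
    MemLp (fun τ => a ⬝ᵥ τ - a ⬝ᵥ μ) 2 P :=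
  have := h.isProbabilityMeasure
  (memLp_finsetSum _ fun i _ => (h.memLp_eval i).const_mul (a i)).sub (memLp_const _)

lemma integral_dotProduct_sub (h : HasMeanCovariance P μ S) (a : ι → ℝ) :
    ∫ τ, (a ⬝ᵥ τ - a ⬝ᵥ μ) ∂P = 0 := by
  have := h.isProbabilityMeasure
  have hint i : Integrable (fun τ : ι → ℝ => a i * (τ i - μ i)) P :=
    (((h.memLp_eval i).integrable one_le_two).sub (integrable_const _)).const_mul _
  simp_rw [dotProduct, ← Finset.sum_sub_distrib, ← mul_sub]
  rw [integral_finsetSum _ fun i _ => hint i]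
  refine Finset.sum_eq_zero fun i _ => ?_
  rw [integral_const_mul, integral_sub ((h.memLp_eval i).integrable one_le_two)
    (integrable_const _), h.integral_eval]
  simp

lemma integral_dotProduct_sub_sq (h : HasMeanCovariance P μ S) (a : ι → ℝ) :
    ∫ τ, (a ⬝ᵥ τ - a ⬝ᵥ μ) ^ 2 ∂P = a ⬝ᵥ S *ᵥ a := by
  have hint i j : Integrable (fun τ : ι → ℝ => a i * a j * ((τ i - μ i) * (τ j - μ j))) P :=
    have := h.isProbabilityMeasure
    (((h.memLp_eval i).sub (memLp_const _)).integrable_mul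
      ((h.memLp_eval j).sub (memLp_const _))).const_mul _
  have hsq (τ : ι → ℝ) : (a ⬝ᵥ τ - a ⬝ᵥ μ) ^ 2 =
      ∑ i, ∑ j, a i * a j * ((τ i - μ i) * (τ j - μ j)) := by
    simp_rw [dotProduct, ← Finset.sum_sub_distrib, sq, Finset.sum_mul_sum]
    exact Finset.sum_congr rfl fun i _ => Finset.sum_congr rfl fun j _ => by ring
  simp_rw [hsq]
  rw [integral_finsetSum _ fun i _ => integrable_finsetSum _ fun j _ => hint i j]
  simp_rw [integral_finsetSum _ fun j _ => hint _ j, integral_const_mul, h.integral_mul,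
    dotProduct, mulVec, dotProduct, Finset.mul_sum]
  exact Finset.sum_congr rfl fun i _ => Finset.sum_congr rfl fun j _ => by ring

theorem ofReal_le_measure_dotProduct_le (h : HasMeanCovariance P μ S) (hS : S.PosDef)
    {a : ι → ℝ} {b δ : ℝ} (hδ : δ ∈ Ioo 0 1)
    (hb : a ⬝ᵥ μ + √((1 - δ) / δ) * √(a ⬝ᵥ S *ᵥ a) ≤ b) :
    ENNReal.ofReal (1 - δ) ≤ P {τ | a ⬝ᵥ τ ≤ b} := by
  have := h.isProbabilityMeasure
  rcases eq_or_ne a 0 with rfl | ha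
  · simp only [zero_dotProduct, Real.sqrt_zero, mul_zero, add_zero] at hb
    simp [hb, hδ.1.le]
  have hq : 0 < a ⬝ᵥ S *ᵥ a := hS.dotProduct_mulVec_pos ha
  have ht : 0 < b - a ⬝ᵥ μ := by
    have : 0 < √((1 - δ) / δ) * √(a ⬝ᵥ S *ᵥ a) :=
      mul_pos (Real.sqrt_pos.2 (div_pos (sub_pos.2 hδ.2) hδ.1)) (Real.sqrt_pos.2 hq)
    linarith
  have hcompl : {τ | a ⬝ᵥ τ ≤ b}ᶜ ⊆ {τ | b - a ⬝ᵥ μ ≤ a ⬝ᵥ τ - a ⬝ᵥ μ} := fun τ hτ => by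
    simp only [mem_compl_iff, mem_ofPred_eq, not_le] at hτ ⊢
    linarith
  have htail : P.real {τ | a ⬝ᵥ τ ≤ b}ᶜ ≤ δ := by
    refine (measureReal_mono hcompl).trans ((measureReal_ge_le_div_add_sq
      (h.memLp_dotProduct_sub a) (h.integral_dotProduct_sub a) ht).trans ?_)
    rw [h.integral_dotProduct_sub_sq]
    exact div_add_sq_le_of_sqrt_mul_sqrt_le hδ hq.le (by linarith)
  have hA : MeasurableSet {τ | a ⬝ᵥ τ ≤ b} := measurableSet_le (by fun_prop) measurable_const
  rw [probReal_compl_eq_one_sub hA] at htail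
  rw [← ofReal_measureReal]
  exact ENNReal.ofReal_le_ofReal (by linarith)

end HasMeanCovariance

open scoped MatrixOrder in
lemma Matrix.PosSemidef.exists_eq_transpose_mul_self {ι : Type*} [Fintype ι] [DecidableEq ι]
    {S : Matrix ι ι ℝ} (hS : S.PosSemidef) : ∃ B : Matrix ι ι ℝ, S = Bᵀ * B := by
  refine ⟨CFC.sqrt S, ?_⟩
  rw [← conjTranspose_eq_transpose_of_trivial,
    (nonneg_iff_posSemidef.1 (CFC.sqrt_nonneg S)).isHermitian.eq,
    CFC.sqrt_mul_sqrt_self S (nonneg_iff_posSemidef.2 hS)]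

lemma Matrix.transpose_mul_self_eq_vecMulVec_add {m n R : Type*} [Fintype m] [CommRing R]
    (B : Matrix m n R) {u : m → R} (hu : u ⬝ᵥ u = 1) :
    Bᵀ * B = vecMulVec (Bᵀ *ᵥ u) (Bᵀ *ᵥ u) +
      (B - vecMulVec u (Bᵀ *ᵥ u))ᵀ * (B - vecMulVec u (Bᵀ *ᵥ u)) := by
  have h1 : (vecMulVec u (Bᵀ *ᵥ u))ᵀ * B = vecMulVec (Bᵀ *ᵥ u) (Bᵀ *ᵥ u) := by
    rw [transpose_vecMulVec, vecMulVec_mul, ← vecMul_transpose, transpose_transpose]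
  have h2 : Bᵀ * vecMulVec u (Bᵀ *ᵥ u) = vecMulVec (Bᵀ *ᵥ u) (Bᵀ *ᵥ u) := mul_vecMulVec _ _ _
  have h3 : (vecMulVec u (Bᵀ *ᵥ u))ᵀ * vecMulVec u (Bᵀ *ᵥ u) =
      vecMulVec (Bᵀ *ᵥ u) (Bᵀ *ᵥ u) := by
    rw [transpose_vecMulVec, vecMulVec_mul, vecMul_vecMulVec, hu, one_smul]
  rw [transpose_sub, Matrix.sub_mul, Matrix.mul_sub, Matrix.mul_sub, h1, h2, h3]
  abel

lemma Matrix.PosSemidef.exists_vecMulVec_add_transpose_mul {ι : Type*} [Fintype ι]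
    [DecidableEq ι] {S : Matrix ι ι ℝ} (hS : S.PosSemidef) (a : ι → ℝ) :
    ∃ (w : ι → ℝ) (C : Matrix ι ι ℝ),
      a ⬝ᵥ w = √(a ⬝ᵥ S *ᵥ a) ∧ C *ᵥ a = 0 ∧ S = vecMulVec w w + Cᵀ * C := by
  obtain ⟨B, rfl⟩ := hS.exists_eq_transpose_mul_self
  rw [← mulVec_mulVec, dotProduct_mulVec, vecMul_transpose]
  generalize hv : B *ᵥ a = v
  rcases eq_or_ne v 0 with rfl | hv0
  · exact ⟨0, B, by simp, hv, by simp⟩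
  set s := √(v ⬝ᵥ v)
  have hs : 0 < s := Real.sqrt_pos.2 (dotProduct_self_star_pos_iff.2 hv0)
  -- project the rows of `B` off the unit vector `u = Ba / ‖Ba‖`
  set u := s⁻¹ • v
  have hvu : v = s • u := by simp [u, smul_smul, hs.ne']
  have huu : u ⬝ᵥ u = 1 := by
    have : v ⬝ᵥ v = s * s := (Real.mul_self_sqrt (dotProduct_self_star_nonneg v)).symm
    simp only [u, smul_dotProduct, dotProduct_smul, smul_eq_mul, this]
    field_simp
  refine ⟨Bᵀ *ᵥ u, B - vecMulVec u (Bᵀ *ᵥ u), ?_, ?_, B.transpose_mul_self_eq_vecMulVec_add huu⟩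
  · rw [dotProduct_mulVec, vecMul_transpose, hv, hvu, smul_dotProduct, huu, smul_eq_mul, mul_one]
  · rw [sub_mulVec, vecMulVec_mulVec, dotProduct_comm, dotProduct_mulVec, vecMul_transpose, hv,
      hvu, smul_dotProduct, huu]
    simp

noncomputable def atomicMeasure {Ω E : Type*} [Fintype Ω] [MeasurableSpace E] (q : Ω → ℝ)
    (x : Ω → E) : Measure E :=
  ∑ ω, ENNReal.ofReal (q ω) • Measure.dirac (x ω)

section AtomicMeasure

variable {Ω E F : Type*} [Fintype Ω] [MeasurableSpace E] [MeasurableSingletonClass E]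
  {q : Ω → ℝ} {x : Ω → E}

open scoped Classical in
lemma atomicMeasure_apply (hq : 0 ≤ q) (s : Set E) :
    atomicMeasure q x s = ENNReal.ofReal (∑ ω with x ω ∈ s, q ω) := by
  rw [ENNReal.ofReal_sum_of_nonneg fun ω _ => hq ω, Finset.sum_filter]
  simp [atomicMeasure, Measure.dirac_apply, Set.indicator_apply]

lemma isProbabilityMeasure_atomicMeasure (hq : 0 ≤ q) (hq1 : ∑ ω, q ω = 1) :
    IsProbabilityMeasure (atomicMeasure q x) :=
  ⟨by simp [atomicMeasure_apply hq, hq1]⟩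

lemma integrable_atomicMeasure [NormedAddCommGroup F] (f : E → F) :
    Integrable f (atomicMeasure q x) :=
  integrable_finsetSum_measure.2 fun _ _ =>
    (integrable_dirac enorm_lt_top).smul_measure ENNReal.ofReal_ne_top

lemma integral_atomicMeasure [NormedAddCommGroup F] [NormedSpace ℝ F] [CompleteSpace F]
    (hq : 0 ≤ q) (f : E → F) : ∫ y, f y ∂atomicMeasure q x = ∑ ω, q ω • f (x ω) := by
  rw [atomicMeasure, integral_finsetSum_measure fun _ _ =>
    (integrable_dirac enorm_lt_top).smul_measure ENNReal.ofReal_ne_top]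
  simp [ENNReal.toReal_ofReal (hq _)]

lemma memLp_two_atomicMeasure {f : E → ℝ} (hf : Measurable f) : MemLp f 2 (atomicMeasure q x) :=
  (memLp_two_iff_integrable_sq hf.aestronglyMeasurable).2 (integrable_atomicMeasure _)

end AtomicMeasure

def bernoulliWeight (p : ℝ) (e : Bool) : ℝ := if e then p else 1 - p

noncomputable def stdBernoulli (p : ℝ) (e : Bool) : ℝ :=
  ((if e then 1 else 0) - p) / √(p * (1 - p))

lemma bernoulliWeight_nonneg {p : ℝ} (hp : p ∈ Icc 0 1) (e : Bool) : 0 ≤ bernoulliWeight p e := by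
  cases e <;> simp [bernoulliWeight, hp.1, hp.2]

lemma sum_bernoulliWeight (p : ℝ) : ∑ e, bernoulliWeight p e = 1 := by simp [bernoulliWeight]

lemma sum_bernoulliWeight_mul_stdBernoulli (p : ℝ) :
    ∑ e, bernoulliWeight p e * stdBernoulli p e = 0 := by
  simp only [Fintype.sum_bool, bernoulliWeight, stdBernoulli, Bool.false_eq_true, ↓reduceIte]
  ring

lemma sum_bernoulliWeight_mul_stdBernoulli_sq {p : ℝ} (hp : p ∈ Ioo 0 1) :
    ∑ e, bernoulliWeight p e * stdBernoulli p e ^ 2 = 1 := by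
  have hσ : 0 < p * (1 - p) := mul_pos hp.1 (sub_pos.2 hp.2)
  simp only [Fintype.sum_bool, bernoulliWeight, stdBernoulli, Bool.false_eq_true, ↓reduceIte,
    div_pow, Real.sq_sqrt hσ.le]
  rw [← mul_div_assoc, ← mul_div_assoc, ← add_div, div_eq_one_iff_eq hσ.ne']
  ring

lemma stdBernoulli_true {p : ℝ} (hp : 0 ≤ p) : stdBernoulli p true = √((1 - p) / p) := by
  rw [stdBernoulli, if_pos rfl, Real.sqrt_mul hp, mul_comm, ← div_div, Real.div_sqrt,
    Real.sqrt_div' _ hp]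

noncomputable def signedRow {κ ι : Type*} [Fintype κ] (C : Matrix κ ι ℝ) (ω : κ × Bool) :
    ι → ℝ :=
  ((if ω.2 then 1 else -1) * √(Fintype.card κ)) • C ω.1

section SignedRow

variable {κ ι : Type*} [Fintype κ] (C : Matrix κ ι ℝ)

lemma sum_inv_two_mul_card [Nonempty κ] : ∑ _ω : κ × Bool, (2 * Fintype.card κ : ℝ)⁻¹ = 1 := by
  have hN : (Fintype.card κ : ℝ) ≠ 0 := by exact_mod_cast Fintype.card_ne_zero
  simp [Fintype.card_prod]
  field_simp

lemma sum_inv_two_mul_card_mul_signedRow (i : ι) :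
    ∑ ω, (2 * Fintype.card κ : ℝ)⁻¹ * signedRow C ω i = 0 := by
  simp [signedRow, Fintype.sum_prod_type]

lemma sum_inv_two_mul_card_mul_signedRow_mul [Nonempty κ] (i j : ι) :
    ∑ ω, (2 * Fintype.card κ : ℝ)⁻¹ * (signedRow C ω i * signedRow C ω j) = (Cᵀ * C) i j := by
  have hN : (0 : ℝ) < Fintype.card κ := by exact_mod_cast Fintype.card_pos
  simp only [signedRow, Fintype.sum_prod_type, Fintype.sum_bool, Pi.smul_apply, smul_eq_mul,
    mul_apply, transpose_apply, Bool.false_eq_true, ↓reduceIte]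
  refine Finset.sum_congr rfl fun k _ => ?_
  field_simp
  linear_combination (2 * C k i * C k j) * Real.sq_sqrt hN.le

end SignedRow

section ProductWeights

variable {α β : Type*} [Fintype α] [Fintype β] {p : α → ℝ} {r : β → ℝ}

lemma sum_prod_mul_mul_add (hr : ∑ j, r j = 1) (f : α → ℝ) {h : β → ℝ}
    (hh : ∑ j, r j * h j = 0) :
    ∑ ω : α × β, p ω.1 * r ω.2 * (f ω.1 + h ω.2) = ∑ i, p i * f i := by
  rw [Fintype.sum_prod_type]
  calc ∑ i, ∑ j, p i * r j * (f i + h j)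
      = ∑ i, (p i * f i * ∑ j, r j + p i * ∑ j, r j * h j) := by
        simp only [Finset.mul_sum, ← Finset.sum_add_distrib]
        exact Finset.sum_congr rfl fun i _ => Finset.sum_congr rfl fun j _ => by ring
    _ = ∑ i, p i * f i := by simp [hr, hh]

lemma sum_prod_mul_mul_add_mul_add (hp : ∑ i, p i = 1) (hr : ∑ j, r j = 1) (f g : α → ℝ)
    {h l : β → ℝ} (hh : ∑ j, r j * h j = 0) (hl : ∑ j, r j * l j = 0) :
    ∑ ω : α × β, p ω.1 * r ω.2 * ((f ω.1 + h ω.2) * (g ω.1 + l ω.2)) =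
      ∑ i, p i * (f i * g i) + ∑ j, r j * (h j * l j) := by
  rw [Fintype.sum_prod_type]
  calc ∑ i, ∑ j, p i * r j * ((f i + h j) * (g i + l j))
      = ∑ i, (p i * (f i * g i) * ∑ j, r j + p i * f i * ∑ j, r j * l j +
          p i * g i * ∑ j, r j * h j + p i * ∑ j, r j * (h j * l j)) := by
        simp only [Finset.mul_sum, ← Finset.sum_add_distrib]
        exact Finset.sum_congr rfl fun i _ => Finset.sum_congr rfl fun j _ => by ring
    _ = ∑ i, p i * (f i * g i) + ∑ j, r j * (h j * l j) := by
        simp [hr, hh, hl, Finset.sum_add_distrib, ← Finset.sum_mul, hp]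

end ProductWeights

lemma exists_mem_Ioo_lt_sqrt_mul {δ c s : ℝ} (hδ : δ ∈ Ioo 0 1) (h : c < √((1 - δ) / δ) * s) :
    ∃ p ∈ Ioo δ 1, c < √((1 - p) / p) * s := by
  have hcont : ContinuousAt (fun p => √((1 - p) / p) * s) δ := by
    fun_prop (disch := exact hδ.1.ne')
  have hev : ∀ᶠ p in nhdsWithin δ (Ioi δ), (δ < p ∧ p < 1) ∧ c < √((1 - p) / p) * s :=
    (eventually_mem_nhdsWithin.and ((eventually_lt_nhds hδ.2).filter_mono nhdsWithin_le_nhds)).and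
      ((hcont.eventually_const_lt h).filter_mono nhdsWithin_le_nhds)
  exact hev.exists

section Extremal

variable {ι : Type*} [Fintype ι]

variable (ι) in
noncomputable def extremalWeight (p : ℝ) (ω : Bool × ι × Bool) : ℝ :=
  bernoulliWeight p ω.1 * (2 * Fintype.card ι : ℝ)⁻¹

noncomputable def extremalAtom (μ w : ι → ℝ) (C : Matrix ι ι ℝ) (p : ℝ) (ω : Bool × ι × Bool) :
    ι → ℝ :=
  μ + stdBernoulli p ω.1 • w + signedRow C ω.2

noncomputable def extremalMeasure (μ w : ι → ℝ) (C : Matrix ι ι ℝ) (p : ℝ) : Measure (ι → ℝ) :=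
  atomicMeasure (extremalWeight ι p) (extremalAtom μ w C p)

variable {p : ℝ} (hp : p ∈ Ioo 0 1)
include hp

lemma extremalWeight_nonneg : 0 ≤ extremalWeight ι p :=
  fun ω => mul_nonneg (bernoulliWeight_nonneg (Ioo_subset_Icc_self hp) _) (by positivity)

lemma hasMeanCovariance_extremalMeasure [Nonempty ι] (μ w : ι → ℝ) (C : Matrix ι ι ℝ) :
    HasMeanCovariance (extremalMeasure μ w C p) μ (vecMulVec w w + Cᵀ * C) := by
  have hq := extremalWeight_nonneg (ι := ι) hp
  have hx ω i : extremalAtom μ w C p ω i - μ i = stdBernoulli p ω.1 * w i + signedRow C ω.2 i := by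
    simp [extremalAtom, add_assoc]
  refine ⟨isProbabilityMeasure_atomicMeasure hq ?_,
    fun i => memLp_two_atomicMeasure (measurable_pi_apply i), fun i => ?_, fun i j => ?_⟩
  · rw [Fintype.sum_prod_type]
    simp only [extremalWeight, ← Finset.mul_sum, sum_inv_two_mul_card, mul_one, sum_bernoulliWeight]
  · rw [extremalMeasure, integral_atomicMeasure hq]
    simp only [smul_eq_mul, extremalWeight, extremalAtom, Pi.add_apply, Pi.smul_apply]
    rw [sum_prod_mul_mul_add sum_inv_two_mul_card (fun e => μ i + stdBernoulli p e * w i)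
      (sum_inv_two_mul_card_mul_signedRow C i)]
    simp only [mul_add, Finset.sum_add_distrib, ← Finset.sum_mul, sum_bernoulliWeight, ← mul_assoc,
      sum_bernoulliWeight_mul_stdBernoulli]
    ring
  · rw [extremalMeasure, integral_atomicMeasure hq]
    simp only [smul_eq_mul, hx, extremalWeight]
    rw [sum_prod_mul_mul_add_mul_add (sum_bernoulliWeight p) sum_inv_two_mul_card
      (fun e => stdBernoulli p e * w i) (fun e => stdBernoulli p e * w j)
      (sum_inv_two_mul_card_mul_signedRow C i) (sum_inv_two_mul_card_mul_signedRow C j),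
      sum_inv_two_mul_card_mul_signedRow_mul, Matrix.add_apply, vecMulVec_apply]
    congr 1
    rw [← one_mul (w i * w j), ← sum_bernoulliWeight_mul_stdBernoulli_sq hp, Finset.sum_mul]
    exact Finset.sum_congr rfl fun e _ => by ring

lemma extremalMeasure_dotProduct_lt_le [Nonempty ι] {μ w : ι → ℝ} {C : Matrix ι ι ℝ} {a : ι → ℝ}
    (hCa : C *ᵥ a = 0) :
    extremalMeasure μ w C p {τ | a ⬝ᵥ τ < a ⬝ᵥ μ + √((1 - p) / p) * (a ⬝ᵥ w)} ≤
      ENNReal.ofReal (1 - p) := by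
  have hax ω : a ⬝ᵥ extremalAtom μ w C p ω = a ⬝ᵥ μ + stdBernoulli p ω.1 * (a ⬝ᵥ w) := by
    have : a ⬝ᵥ C ω.2.1 = 0 := by rw [dotProduct_comm]; exact congrFun hCa ω.2.1
    simp only [extremalAtom, signedRow, dotProduct_add, dotProduct_smul, this, smul_eq_mul,
      mul_zero, add_zero]
  rw [extremalMeasure, atomicMeasure_apply (extremalWeight_nonneg hp)]
  refine ENNReal.ofReal_le_ofReal ?_
  -- only the atoms with `Z = -√(p / (1 - p))` lie in the set
  calc ∑ ω with extremalAtom μ w C p ω ∈ _, extremalWeight ι p ω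
        ≤ ∑ ω with ω.1 = false, extremalWeight ι p ω := by
          refine Finset.sum_le_sum_of_subset_of_nonneg (fun ω hω => ?_)
            fun ω _ _ => extremalWeight_nonneg hp ω
          simp only [Finset.mem_filter, Finset.mem_univ, true_and, mem_ofPred_eq, hax] at hω ⊢
          by_contra he
          rw [Bool.not_eq_false] at he
          rw [he, stdBernoulli_true hp.1.le] at hω
          exact lt_irrefl _ hω
    _ = bernoulliWeight p false * ∑ _ω : ι × Bool, (2 * Fintype.card ι : ℝ)⁻¹ := by
          simp [Finset.sum_filter, Fintype.sum_prod_type, extremalWeight]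
          ring
    _ = 1 - p := by rw [sum_inv_two_mul_card, mul_one, bernoulliWeight, if_neg Bool.false_ne_true]

end Extremal

section WorstCase

variable {ι : Type*} [Fintype ι] [DecidableEq ι] {S : Matrix ι ι ℝ}

theorem exists_hasMeanCovariance_measure_dotProduct_lt_le (hS : S.PosSemidef) (μ a : ι → ℝ)
    {p : ℝ} (hp : p ∈ Ioo 0 1) :
    ∃ P, HasMeanCovariance P μ S ∧
      P {τ | a ⬝ᵥ τ < a ⬝ᵥ μ + √((1 - p) / p) * √(a ⬝ᵥ S *ᵥ a)} ≤ ENNReal.ofReal (1 - p) := by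
  cases isEmpty_or_nonempty ι
  · refine ⟨Measure.dirac μ, ⟨inferInstance, isEmptyElim, isEmptyElim, isEmptyElim⟩, ?_⟩
    simp [dotProduct]
  obtain ⟨w, C, haw, hCa, rfl⟩ := hS.exists_vecMulVec_add_transpose_mul a
  rw [← haw]
  exact ⟨_, hasMeanCovariance_extremalMeasure hp μ w C, extremalMeasure_dotProduct_lt_le hp hCa⟩

theorem exists_hasMeanCovariance_measure_dotProduct_le_lt (hS : S.PosSemidef) (μ : ι → ℝ)
    {a : ι → ℝ} {b δ : ℝ} (hδ : δ ∈ Ioo 0 1)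
    (hb : b < a ⬝ᵥ μ + √((1 - δ) / δ) * √(a ⬝ᵥ S *ᵥ a)) :
    ∃ P, HasMeanCovariance P μ S ∧ P {τ | a ⬝ᵥ τ ≤ b} < ENNReal.ofReal (1 - δ) := by
  obtain ⟨p, hp, hbp⟩ := exists_mem_Ioo_lt_sqrt_mul hδ (sub_lt_iff_lt_add'.2 hb)
  obtain ⟨P, hP, hle⟩ :=
    exists_hasMeanCovariance_measure_dotProduct_lt_le hS μ a ⟨hδ.1.trans hp.1, hp.2⟩
  refine ⟨P, hP, (measure_mono fun τ (hτ : a ⬝ᵥ τ ≤ b) => ?_).trans_lt (hle.trans_lt ?_)⟩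
  · exact hτ.trans_lt (by linarith)
  · exact (ENNReal.ofReal_lt_ofReal_iff (sub_pos.2 hδ.2)).2 (by linarith [hp.1])

end WorstCase

/-- Worst-case chance constraint over a mean–variance ambiguity set: for `a ∈ ℝⁿ`, `b ∈ ℝ`,
and `F` the set of all distributions on `ℝⁿ` with mean vector `μ` and positive definite
covariance `S`, the constraint `inf_{P ∈ F} P(aᵀτ ≤ b) ≥ 1 - δ` holds iff
`aᵀμ + √((1-δ)/δ) · √(aᵀ S a) ≤ b`. -/
theorem worst_case_chance_constraint {n : ℕ} (a : Fin n → ℝ) (b : ℝ)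
    (μ : Fin n → ℝ) (S : Matrix (Fin n) (Fin n) ℝ) (hS : S.PosDef)
    (δ : ℝ) (hδ : δ ∈ Set.Ioo (0 : ℝ) 1) :
    (∀ P : Measure (Fin n → ℝ), IsProbabilityMeasure P →
        (∀ i, MemLp (fun τ => τ i) 2 P) →
        (∀ i, ∫ τ, τ i ∂P = μ i) →
        (∀ i j, ∫ τ, (τ i - μ i) * (τ j - μ j) ∂P = S i j) →
        ENNReal.ofReal (1 - δ) ≤ P {τ | ∑ i, a i * τ i ≤ b}) ↔
      ∑ i, a i * μ i +
        Real.sqrt ((1 - δ) / δ) * Real.sqrt (∑ i, ∑ j, a i * S i j * a j) ≤ b := by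
  have hquad : ∑ i, ∑ j, a i * S i j * a j = a ⬝ᵥ S *ᵥ a := by
    simp only [dotProduct, mulVec, Finset.mul_sum, mul_assoc]
  rw [hquad]
  constructor
  · intro h
    by_contra! hb
    obtain ⟨P, hP, hlt⟩ := exists_hasMeanCovariance_measure_dotProduct_le_lt hS.posSemidef μ hδ hb
    exact (h P hP.1 hP.2 hP.3 hP.4).not_gt hlt
  · exact fun hb P hP hL2 hmean hcov => HasMeanCovariance.ofReal_le_measure_dotProduct_le
      ⟨hP, hL2, hmean, hcov⟩ hS hδ hb
end
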